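/- arXiv:2312.16955 — 3 statements merged into one kernel-verified Lean document; each statement's English description precedes it below -/
import Mathlib

section
/- Rayleigh's criterion: Let U_s : [0,∞) → ℝ be a C² bounded shear profile, α a nonzero real number, and suppose ψ ∈ C²([0,∞), ℂ), not identically zero, decaying sufficiently (ψ, ψ' ∈ L²) with ψ(0) = 0, satisfies the Rayleigh equation (U_s − c)(ψ'' − α²ψ) − U_s'' ψ = 0 for some c ∈ ℂ with Im c > 0. Then U_s'' changes sign on (0,∞); in particular U_s has an inflection point. -/
open MeasureTheory

namespace RayleighProofAux

/-- Derivative of `normSq ∘ f`. -/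
lemma hasDerivAt_normSq {f : ℝ → ℂ} {f' : ℂ} {y : ℝ} (hf : HasDerivAt f f' y) :
    HasDerivAt (fun t => Complex.normSq (f t))
      ((f y).re * f'.re + (f y).im * f'.im + ((f y).re * f'.re + (f y).im * f'.im)) y := by
  have hre : HasDerivAt (fun t => (f t).re) f'.re y :=
    Complex.reCLM.hasFDerivAt.comp_hasDerivAt y hf
  have him : HasDerivAt (fun t => (f t).im) f'.im y :=
    Complex.imCLM.hasFDerivAt.comp_hasDerivAt y hf
  have h := (hre.mul hre).add (him.mul him)
  have heq : (fun t => Complex.normSq (f t))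
      = fun t => (f t).re * (f t).re + (f t).im * (f t).im := by
    funext t; rw [Complex.normSq_apply]
  rw [heq]
  exact h.congr_deriv (by ring)

/-- A function antitone on `[0,∞)` that vanishes at `0` and is dominated by an integrable
function on `(0,∞)` vanishes identically on `[0,∞)`. -/
lemma vanish_of_antitone {F B : ℝ → ℝ} (hmono : AntitoneOn F (Set.Ici 0)) (hF0 : F 0 = 0)
    (hBint : Integrable B (volume.restrict (Set.Ioi (0 : ℝ))))
    (hbd : ∀ y, |F y| ≤ B y) : ∀ y, 0 ≤ y → F y = 0 := by
  intro y hy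
  rcases eq_or_lt_of_le hy with h0 | hy'
  · rw [← h0, hF0]
  by_contra hne
  have hFy_le : F y ≤ 0 := by
    have := hmono (Set.self_mem_Ici) (Set.mem_Ici.2 hy) hy
    rwa [hF0] at this
  have hFy : F y < 0 := lt_of_le_of_ne hFy_le hne
  have hsub : Set.Ioi y ⊆ Set.Ioi (0 : ℝ) := fun x hx => lt_trans hy' hx
  have hBy : Integrable B (volume.restrict (Set.Ioi y)) :=
    (show IntegrableOn B (Set.Ioi 0) volume from hBint).mono_set hsub
  have hconst : Integrable (fun _ : ℝ => -F y) (volume.restrict (Set.Ioi y)) := by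
    refine hBy.mono' aestronglyMeasurable_const ?_
    refine (ae_restrict_iff' measurableSet_Ioi).2 (Filter.Eventually.of_forall fun x hx => ?_)
    have hFx : F x ≤ F y :=
      hmono (Set.mem_Ici.2 hy) (Set.mem_Ici.2 (le_of_lt (lt_trans hy' hx))) (le_of_lt hx)
    calc ‖-F y‖ = -F y := by rw [Real.norm_eq_abs, abs_of_pos (neg_pos.2 hFy)]
    _ ≤ -F x := by linarith
    _ ≤ |F x| := neg_le_abs _
    _ ≤ B x := hbd x
  rw [integrable_const_iff] at hconst
  rcases hconst with h | h
  · have : F y = 0 := by linarith [neg_eq_zero.mp h]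
    exact hne this
  · rw [isFiniteMeasure_restrict, Real.volume_Ioi] at h
    exact h rfl

/-- A nonzero constant is not in `L²` of a restriction to `(T,∞)`. -/
lemma const_not_memℒp {T : ℝ} {e : ℝ} (he : 0 < e)
    (h : MemLp (fun _ : ℝ => e) 2 (volume.restrict (Set.Ioi T))) : False := by
  rcases (memLp_const_iff (by norm_num) (by norm_num)).mp h with h0 | hfin
  · exact absurd h0 (ne_of_gt he)
  · rw [Measure.restrict_apply_univ, Real.volume_Ioi] at hfin
    exact lt_irrefl _ hfin

end RayleighProofAux

open RayleighProofAux

/-- Key step: if `U''` has one sign on `(0,∞)`, the hypotheses are contradictory. -/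
lemma rayleigh_sign_aux
    (U : ℝ → ℝ)
    (α : ℝ) (hα : α ≠ 0)
    (c : ℂ) (hc : 0 < c.im)
    (ψ : ℝ → ℂ) (hψ : ContDiff ℝ 2 ψ)
    (hnontriv : ∃ y : ℝ, 0 ≤ y ∧ ψ y ≠ 0)
    (hbc : ψ 0 = 0)
    (hL2 : MemLp ψ 2 (volume.restrict (Set.Ioi (0 : ℝ))))
    (hL2' : MemLp (deriv ψ) 2 (volume.restrict (Set.Ioi (0 : ℝ))))
    (hray : ∀ y : ℝ, 0 < y →
      ((U y : ℂ) - c) * (deriv (deriv ψ) y - (α : ℂ) ^ 2 * ψ y)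
        - Complex.ofReal (deriv (deriv U) y) * ψ y = 0)
    (hsign : (∀ y, 0 < y → deriv (deriv U) y ≤ 0) ∨ (∀ y, 0 < y → 0 ≤ deriv (deriv U) y)) :
    False := by
  -- basic differentiability facts
  have h2 : ContDiff ℝ (1+1) ψ := by norm_num at hψ ⊢; exact hψ
  have h1 : ContDiff ℝ 1 (deriv ψ) := (contDiff_succ_iff_deriv.mp h2).2.2
  have hψdiff : Differentiable ℝ ψ := hψ.differentiable (by norm_num)
  have hψ'diff : Differentiable ℝ (deriv ψ) := h1.differentiable one_ne_zero
  have hdψ : ∀ y, HasDerivAt ψ (deriv ψ y) y := fun y => (hψdiff y).hasDerivAt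
  have hdψ' : ∀ y, HasDerivAt (deriv ψ) (deriv (deriv ψ) y) y := fun y => (hψ'diff y).hasDerivAt
  -- nonvanishing of U - c
  have hz : ∀ y : ℝ, ((U y : ℂ) - c) ≠ 0 := by
    intro y h
    have := congrArg Complex.im h
    simp [Complex.sub_im, Complex.ofReal_im] at this
    exact absurd this (ne_of_gt hc)
  have hm : ∀ y : ℝ, 0 < Complex.normSq ((U y : ℂ) - c) := fun y =>
    Complex.normSq_pos.2 (hz y)
  -- the key functional F
  set F : ℝ → ℝ := fun t => (deriv ψ t * (starRingEnd ℂ) (ψ t)).im with hFdef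
  have hF0 : F 0 = 0 := by simp [hFdef, hbc]
  have hFd : ∀ y, HasDerivAt F
      ((deriv (deriv ψ) y * (starRingEnd ℂ) (ψ y)).im) y := by
    intro y
    have hmul : HasDerivAt (fun t => deriv ψ t * (starRingEnd ℂ) (ψ t))
        (deriv (deriv ψ) y * (starRingEnd ℂ) (ψ y)
          + deriv ψ y * (starRingEnd ℂ) (deriv ψ y)) y := by
      have hstar : HasDerivAt (fun t => (starRingEnd ℂ) (ψ t)) ((starRingEnd ℂ) (deriv ψ y)) y := by
        simpa [Complex.star_def] using (hdψ y).star
      exact (hdψ' y).mul hstar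
    have := Complex.imCLM.hasFDerivAt.comp_hasDerivAt y hmul
    have heq : Complex.imCLM (deriv (deriv ψ) y * (starRingEnd ℂ) (ψ y)
        + deriv ψ y * (starRingEnd ℂ) (deriv ψ y))
        = (deriv (deriv ψ) y * (starRingEnd ℂ) (ψ y)).im := by
      simp [Complex.add_im, Complex.mul_conj]
    rw [heq] at this
    exact this
  -- Rayleigh gives the second derivative in terms of ψ on (0,∞)
  have hpsi'' : ∀ y : ℝ, 0 < y → deriv (deriv ψ) y
      = (α : ℂ)^2 * ψ y + Complex.ofReal (deriv (deriv U) y) * ψ y * ((U y : ℂ) - c)⁻¹ := by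
    intro y hy
    have h := hray y hy
    have hzy := hz y
    field_simp
    linear_combination h
  -- the derivative of F on (0,∞)
  have hDval : ∀ y : ℝ, 0 < y →
      (deriv (deriv ψ) y * (starRingEnd ℂ) (ψ y)).im
        = deriv (deriv U) y * (Complex.normSq (ψ y) * c.im / Complex.normSq ((U y : ℂ) - c)) := by
    intro y hy
    have hψconj : ψ y * (starRingEnd ℂ) (ψ y) = (Complex.normSq (ψ y) : ℂ) :=
      Complex.mul_conj _
    have e1 : deriv (deriv ψ) y * (starRingEnd ℂ) (ψ y)
        = (α : ℂ)^2 * (ψ y * (starRingEnd ℂ) (ψ y))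
          + Complex.ofReal (deriv (deriv U) y) * (ψ y * (starRingEnd ℂ) (ψ y)) * ((U y : ℂ) - c)⁻¹ := by
      rw [hpsi'' y hy]; ring
    rw [e1, hψconj]
    have him : (((U y : ℂ) - c)⁻¹).im = c.im / Complex.normSq ((U y : ℂ) - c) := by
      rw [Complex.inv_im]
      simp [Complex.sub_im, Complex.ofReal_im]
    simp only [Complex.add_im, Complex.mul_im, Complex.ofReal_re, Complex.ofReal_im,
      ← Complex.ofReal_pow, ← Complex.ofReal_mul, Complex.ofReal_re]
    rw [him]
    ring
  -- integrable bound for F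
  have hBint : Integrable (fun y => ‖deriv ψ y * ψ y‖) (volume.restrict (Set.Ioi (0 : ℝ))) := by
    have hsm : MemLp (deriv ψ • ψ) 1 (volume.restrict (Set.Ioi (0 : ℝ))) := by
      exact MemLp.smul hL2 hL2'
    exact (memLp_one_iff_integrable.mp hsm).norm
  have hbd : ∀ y, |F y| ≤ ‖deriv ψ y * ψ y‖ := by
    intro y
    calc |F y| ≤ ‖deriv ψ y * (starRingEnd ℂ) (ψ y)‖ := Complex.abs_im_le_norm _
    _ = ‖deriv ψ y * ψ y‖ := by
        rw [norm_mul, norm_mul, Complex.norm_conj]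
  -- F vanishes on [0,∞)
  have hFzero : ∀ y, 0 ≤ y → F y = 0 := by
    have hFdiff : Differentiable ℝ F := fun x => (hFd x).differentiableAt
    have hcont : ContinuousOn F (Set.Ici 0) := hFdiff.continuous.continuousOn
    have hdiff : DifferentiableOn ℝ F (interior (Set.Ici (0:ℝ))) :=
      fun x _ => (hFd x).differentiableAt.differentiableWithinAt
    rcases hsign with hneg | hpos
    · have hanti : AntitoneOn F (Set.Ici 0) := by
        refine antitoneOn_of_deriv_nonpos (convex_Ici 0) hcont hdiff ?_
        intro x hx
        rw [interior_Ici] at hx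
        rw [(hFd x).deriv, hDval x hx]
        have h1 : 0 ≤ Complex.normSq (ψ x) * c.im / Complex.normSq ((U x : ℂ) - c) := by
          apply div_nonneg (mul_nonneg (Complex.normSq_nonneg _) (le_of_lt hc)) (le_of_lt (hm x))
        exact mul_nonpos_of_nonpos_of_nonneg (hneg x hx) h1
      exact vanish_of_antitone hanti hF0 hBint hbd
    · have hanti : AntitoneOn (fun t => -F t) (Set.Ici 0) := by
        refine antitoneOn_of_deriv_nonpos (convex_Ici 0) hcont.neg
          (fun x hx => ((hFd x).neg).differentiableAt.differentiableWithinAt) ?_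
        intro x hx
        rw [interior_Ici] at hx
        rw [(show HasDerivAt (fun t => -F t) _ x from (hFd x).neg).deriv, hDval x hx]
        have h1 : 0 ≤ Complex.normSq (ψ x) * c.im / Complex.normSq ((U x : ℂ) - c) := by
          apply div_nonneg (mul_nonneg (Complex.normSq_nonneg _) (le_of_lt hc)) (le_of_lt (hm x))
        have := mul_nonneg (hpos x hx) h1
        linarith
      intro y hy
      have := vanish_of_antitone hanti (by simp [hF0]) hBint
        (fun y => by rw [abs_neg]; exact hbd y) y hy
      linarith
  -- hence U'' ψ = 0 on (0,∞)
  have hkey : ∀ y : ℝ, 0 < y → Complex.ofReal (deriv (deriv U) y) * ψ y = 0 := by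
    intro y hy
    have hev : F =ᶠ[nhds y] (fun _ => (0:ℝ)) := by
      filter_upwards [isOpen_Ioi.mem_nhds hy] with x hx
      exact hFzero x (le_of_lt hx)
    have hd0 : deriv F y = 0 := by rw [hev.deriv_eq]; simp
    rw [(hFd y).deriv, hDval y hy] at hd0
    have hfac : 0 < c.im / Complex.normSq ((U y : ℂ) - c) := div_pos hc (hm y)
    have hprod : deriv (deriv U) y * Complex.normSq (ψ y) = 0 := by
      by_contra hne
      apply hne
      have := hd0
      rw [mul_div_assoc, ← mul_assoc] at this
      exact (mul_eq_zero.mp this).resolve_right (ne_of_gt hfac)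
    rcases mul_eq_zero.mp hprod with h | h
    · rw [h]; simp
    · rw [Complex.normSq_eq_zero.mp h]; simp
  -- hence ψ'' = α² ψ on (0,∞)
  have hODE : ∀ y : ℝ, 0 < y → deriv (deriv ψ) y = (α : ℂ)^2 * ψ y := by
    intro y hy
    have h := hray y hy
    rw [show Complex.ofReal (deriv (deriv U) y) * ψ y = 0 from hkey y hy, sub_zero] at h
    exact sub_eq_zero.mp ((mul_eq_zero.mp h).resolve_left (hz y))
  -- exponential-type growth argument: set β = |α|, h = ψ' + βψ
  set β : ℝ := |α| with hβdef
  have hβ : 0 < β := abs_pos.mpr hα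
  have hβsq : (β : ℂ)^2 = (α : ℂ)^2 := by
    rw [← Complex.ofReal_pow, ← Complex.ofReal_pow, sq_abs]
  set g : ℝ → ℂ := fun t => deriv ψ t + (β : ℂ) * ψ t with hgdef
  have hgd : ∀ y, HasDerivAt g (deriv (deriv ψ) y + (β : ℂ) * deriv ψ y) y :=
    fun y => (hdψ' y).add ((hdψ y).const_mul _)
  have hgd' : ∀ y : ℝ, 0 < y → HasDerivAt g ((β : ℂ) * g y) y := by
    intro y hy
    have := hgd y
    rwa [hODE y hy, ← hβsq, show (β:ℂ)^2 * ψ y + (β:ℂ) * deriv ψ y = (β:ℂ) * g y by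
      rw [hgdef]; ring] at this
  have hgL2 : MemLp g 2 (volume.restrict (Set.Ioi (0 : ℝ))) :=
    hL2'.add (hL2.const_mul ((β : ℂ)))
  -- u = |g|² is nondecreasing on (0,∞)
  set u : ℝ → ℝ := fun t => Complex.normSq (g t) with hudef
  have hud : ∀ y, HasDerivAt u
      ((g y).re * (deriv (deriv ψ) y + (β : ℂ) * deriv ψ y).re
        + (g y).im * (deriv (deriv ψ) y + (β : ℂ) * deriv ψ y).im
        + ((g y).re * (deriv (deriv ψ) y + (β : ℂ) * deriv ψ y).re
          + (g y).im * (deriv (deriv ψ) y + (β : ℂ) * deriv ψ y).im)) y :=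
    fun y => hasDerivAt_normSq (hgd y)
  have hudiff : Differentiable ℝ u := fun y => (hud y).differentiableAt
  have hucont : Continuous u := hudiff.continuous
  have huderiv : ∀ y : ℝ, 0 < y → deriv u y = 2 * β * u y := by
    intro y hy
    have h2 : deriv (deriv ψ) y + (β : ℂ) * deriv ψ y = (β : ℂ) * g y :=
      (hgd y).unique (hgd' y hy)
    rw [(hud y).deriv, h2]
    simp only [Complex.mul_re, Complex.mul_im, Complex.ofReal_re, Complex.ofReal_im, hudef,
      Complex.normSq_apply]
    ring
  -- u vanishes on (0,∞)
  have hu0 : ∀ y : ℝ, 0 < y → u y = 0 := by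
    intro y₀ hy₀
    by_contra hne
    have hupos : 0 < u y₀ := lt_of_le_of_ne (Complex.normSq_nonneg _) (Ne.symm hne)
    have hmono : MonotoneOn u (Set.Ici y₀) := by
      refine monotoneOn_of_deriv_nonneg (convex_Ici y₀)
        hucont.continuousOn
        (fun x _ => (hud x).differentiableAt.differentiableWithinAt) ?_
      intro x hx
      rw [interior_Ici] at hx
      rw [huderiv x (lt_trans hy₀ hx)]
      have := Complex.normSq_nonneg (g x)
      positivity
    -- constant lower bound contradicts L²
    have hg2 : MemLp g 2 (volume.restrict (Set.Ioi y₀)) :=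
      hgL2.mono_measure (Measure.restrict_mono (fun x hx => lt_trans hy₀ hx) le_rfl)
    have hcst : MemLp (fun _ : ℝ => Real.sqrt (u y₀)) 2 (volume.restrict (Set.Ioi y₀)) := by
      refine MemLp.of_le hg2 aestronglyMeasurable_const ?_
      refine (ae_restrict_iff' measurableSet_Ioi).2 (Filter.Eventually.of_forall fun x hx => ?_)
      have hux : u y₀ ≤ u x := hmono Set.self_mem_Ici (Set.mem_Ici.2 (le_of_lt hx)) (le_of_lt hx)
      rw [Real.norm_eq_abs, abs_of_nonneg (Real.sqrt_nonneg _), Complex.norm_def]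
      exact Real.sqrt_le_sqrt hux
    exact const_not_memℒp (Real.sqrt_pos.mpr hupos) hcst
  -- hence ψ' = -βψ on (0,∞)
  have hψ' : ∀ y : ℝ, 0 < y → deriv ψ y = -(β : ℂ) * ψ y := by
    intro y hy
    have : g y = 0 := Complex.normSq_eq_zero.mp (hu0 y hy)
    rw [hgdef] at this
    simp only at this
    linear_combination this
  -- v = |ψ|² is antitone on [0,∞), hence zero
  set v : ℝ → ℝ := fun t => Complex.normSq (ψ t) with hvdef
  have hvd : ∀ y, HasDerivAt v
      ((ψ y).re * (deriv ψ y).re + (ψ y).im * (deriv ψ y).im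
        + ((ψ y).re * (deriv ψ y).re + (ψ y).im * (deriv ψ y).im)) y :=
    fun y => hasDerivAt_normSq (hdψ y)
  have hvdiff : Differentiable ℝ v := fun y => (hvd y).differentiableAt
  have hvcont : Continuous v := hvdiff.continuous
  have hvanti : AntitoneOn v (Set.Ici 0) := by
    refine antitoneOn_of_deriv_nonpos (convex_Ici 0) hvcont.continuousOn
      (fun x _ => (hvd x).differentiableAt.differentiableWithinAt) ?_
    intro x hx
    rw [interior_Ici] at hx
    rw [(hvd x).deriv, hψ' x hx]
    have h1 : (-(β:ℂ) * ψ x).re = -β * (ψ x).re := by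
      simp [Complex.mul_re, Complex.ofReal_re, Complex.ofReal_im]
    have h2 : (-(β:ℂ) * ψ x).im = -β * (ψ x).im := by
      simp [Complex.mul_im, Complex.ofReal_re, Complex.ofReal_im]
    rw [h1, h2]
    have := Complex.normSq_nonneg (ψ x)
    rw [Complex.normSq_apply] at this
    nlinarith
  -- conclusion: ψ vanishes on [0,∞), contradiction
  obtain ⟨y, hy, hyne⟩ := hnontriv
  apply hyne
  have hv0 : v y ≤ 0 := by
    have := hvanti Set.self_mem_Ici (Set.mem_Ici.2 hy) hy
    rwa [show v 0 = 0 by simp [hvdef, hbc]] at this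
  have : v y = 0 := le_antisymm hv0 (Complex.normSq_nonneg _)
  exact Complex.normSq_eq_zero.mp this

/-- Rayleigh's criterion: if the Rayleigh equation
`(U_s − c)(ψ'' − α²ψ) − U_s'' ψ = 0` on `(0,∞)` with `ψ(0) = 0`, `ψ, ψ' ∈ L²`, admits a
nontrivial solution for some `c` with `Im c > 0`, then `U_s''` changes sign on `(0,∞)`;
in particular `U_s` has an inflection point. -/
theorem rayleigh_criterion
    (U : ℝ → ℝ) (hU : ContDiff ℝ 2 U) (M : ℝ) (hbdd : ∀ y : ℝ, 0 ≤ y → |U y| ≤ M)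
    (α : ℝ) (hα : α ≠ 0)
    (c : ℂ) (hc : 0 < c.im)
    (ψ : ℝ → ℂ) (hψ : ContDiff ℝ 2 ψ)
    (hnontriv : ∃ y : ℝ, 0 ≤ y ∧ ψ y ≠ 0)
    (hbc : ψ 0 = 0)
    (hL2 : MemLp ψ 2 (volume.restrict (Set.Ioi (0 : ℝ))))
    (hL2' : MemLp (deriv ψ) 2 (volume.restrict (Set.Ioi (0 : ℝ))))
    (hray : ∀ y : ℝ, 0 < y →
      ((U y : ℂ) - c) * (deriv (deriv ψ) y - (α : ℂ) ^ 2 * ψ y)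
        - Complex.ofReal (deriv (deriv U) y) * ψ y = 0) :
    ((∃ y₁ : ℝ, 0 < y₁ ∧ 0 < deriv (deriv U) y₁) ∧
      (∃ y₂ : ℝ, 0 < y₂ ∧ deriv (deriv U) y₂ < 0)) ∧
    (∃ y₀ : ℝ, 0 < y₀ ∧ deriv (deriv U) y₀ = 0) := by
  have hpos : ∃ y₁ : ℝ, 0 < y₁ ∧ 0 < deriv (deriv U) y₁ := by
    by_contra hcon
    push_neg at hcon
    exact rayleigh_sign_aux U α hα c hc ψ hψ hnontriv hbc hL2 hL2' hray (Or.inl hcon)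
  have hneg : ∃ y₂ : ℝ, 0 < y₂ ∧ deriv (deriv U) y₂ < 0 := by
    by_contra hcon
    push_neg at hcon
    exact rayleigh_sign_aux U α hα c hc ψ hψ hnontriv hbc hL2 hL2' hray (Or.inr hcon)
  refine ⟨⟨hpos, hneg⟩, ?_⟩
  obtain ⟨y₁, hy₁, hU₁⟩ := hpos
  obtain ⟨y₂, hy₂, hU₂⟩ := hneg
  -- continuity of U''
  have h2U : ContDiff ℝ (1+1) U := by norm_num at hU ⊢; exact hU
  have h1U : ContDiff ℝ 1 (deriv U) := (contDiff_succ_iff_deriv.mp h2U).2.2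
  have hcont : Continuous (deriv (deriv U)) := (contDiff_one_iff_deriv.mp h1U).2
  have hsub := intermediate_value_uIcc (f := deriv (deriv U)) (a := y₁) (b := y₂)
    hcont.continuousOn
  have h0mem : (0:ℝ) ∈ Set.uIcc (deriv (deriv U) y₁) (deriv (deriv U) y₂) :=
    Set.mem_uIcc.2 (Or.inr ⟨le_of_lt hU₂, le_of_lt hU₁⟩)
  obtain ⟨y₀, hy₀mem, hy₀⟩ := hsub h0mem
  refine ⟨y₀, ?_, hy₀⟩
  rcases Set.mem_uIcc.mp hy₀mem with ⟨h, _⟩ | ⟨h, _⟩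
  · exact lt_of_lt_of_le hy₁ h
  · exact lt_of_lt_of_le hy₂ h
end

section
/- Under the hypotheses of Rayleigh's criterion (ψ a nontrivial L² eigenfunction of the Rayleigh equation with Im c ≠ 0, ψ(0)=0, α ≠ 0), the following energy identity holds: ∫₀^∞ (|ψ'|² + α²|ψ|²) dy = − ∫₀^∞ U_s''(y) |ψ(y)|² / (U_s(y) − c) dy, and taking imaginary parts, Im c · ∫₀^∞ U_s''(y)|ψ(y)|²/|U_s(y) − c|² dy = 0. -/
open MeasureTheory

/-- Energy identity for the Rayleigh equation: if `ψ` is a nontrivial eigenfunction of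
`(U_s − c)(ψ'' − α²ψ) = U_s'' ψ` with `Im c ≠ 0`, `ψ(0) = 0`, decay at infinity and `α ≠ 0`,
then `∫₀^∞ (|ψ'|² + α²|ψ|²) = − ∫₀^∞ U_s'' |ψ|²/(U_s − c)`, and taking imaginary parts,
`Im c · ∫₀^∞ U_s'' |ψ|²/|U_s − c|² = 0`. -/
theorem rayleigh_energy_identity
    (U : ℝ → ℝ) (hU : ContDiff ℝ 2 U)
    (α : ℝ) (hα : α ≠ 0)
    (c : ℂ) (hc : c.im ≠ 0)
    (ψ : ℝ → ℂ) (hψ : ContDiff ℝ 2 ψ)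
    (hnontriv : ∃ y : ℝ, 0 ≤ y ∧ ψ y ≠ 0)
    (hbc : ψ 0 = 0)
    (hdecay : Filter.Tendsto ψ Filter.atTop (nhds 0))
    (hdecay' : Filter.Tendsto (deriv ψ) Filter.atTop (nhds 0))
    (hL2 : MemLp ψ 2 (volume.restrict (Set.Ioi (0 : ℝ))))
    (hL2' : MemLp (deriv ψ) 2 (volume.restrict (Set.Ioi (0 : ℝ))))
    (hint : IntegrableOn
      (fun y => Complex.ofReal (deriv (deriv U) y) * (‖ψ y‖ : ℂ) ^ 2 / ((U y : ℂ) - c))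
      (Set.Ioi (0 : ℝ)) volume)
    (hint' : IntegrableOn
      (fun y => deriv (deriv U) y * ‖ψ y‖ ^ 2 / ‖(U y : ℂ) - c‖ ^ 2)
      (Set.Ioi (0 : ℝ)) volume)
    (hray : ∀ y : ℝ, 0 < y →
      ((U y : ℂ) - c) * (deriv (deriv ψ) y - (α : ℂ) ^ 2 * ψ y)
        = Complex.ofReal (deriv (deriv U) y) * ψ y) :
    ((∫ y in Set.Ioi (0 : ℝ), (‖deriv ψ y‖ ^ 2 + α ^ 2 * ‖ψ y‖ ^ 2) : ℝ) : ℂ)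
        = - ∫ y in Set.Ioi (0 : ℝ),
            Complex.ofReal (deriv (deriv U) y) * (‖ψ y‖ : ℂ) ^ 2 / ((U y : ℂ) - c)
    ∧ c.im * ∫ y in Set.Ioi (0 : ℝ),
        deriv (deriv U) y * ‖ψ y‖ ^ 2 / ‖(U y : ℂ) - c‖ ^ 2 = 0 := by
  have hne : ∀ y : ℝ, (U y : ℂ) - c ≠ 0 := by
    intro y h
    apply hc
    have := congrArg Complex.im h
    simpa using this.symm
  -- smoothness facts
  have h2 : ContDiff ℝ (1 + 1) ψ := by norm_num; exact hψ
  have hd := contDiff_succ_iff_deriv.mp h2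
  have hd1 := contDiff_one_iff_deriv.mp hd.2.2
  have hψd : ∀ y, HasDerivAt ψ (deriv ψ y) y := fun y => (hd.1 y).hasDerivAt
  have hψdd : ∀ y, HasDerivAt (deriv ψ) (deriv (deriv ψ) y) y := fun y => (hd1.1 y).hasDerivAt
  -- key algebraic fact
  have key : ∀ z : ℂ, (starRingEnd ℂ) z * z = ((‖z‖ : ℂ)) ^ 2 := by
    intro z
    rw [mul_comm, Complex.mul_conj, Complex.normSq_eq_norm_sq]
    push_cast
    ring
  -- the function for integration by parts
  set F : ℝ → ℂ := fun y => (starRingEnd ℂ) (ψ y) * deriv ψ y with hFdef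
  set F' : ℝ → ℂ := fun y =>
    ((‖deriv ψ y‖ : ℂ)) ^ 2 + (starRingEnd ℂ) (ψ y) * deriv (deriv ψ) y with hF'def
  have hF' : ∀ y : ℝ, HasDerivAt F (F' y) y := by
    intro y
    have h := ((hψd y).star.mul (hψdd y))
    have e : (star (deriv ψ y) : ℂ) * deriv ψ y + star (ψ y) * deriv (deriv ψ) y = F' y := by
      simp only [hF'def, Complex.star_def, key]
    exact e ▸ h
  -- the pointwise identity from the Rayleigh equation
  have heq : ∀ y ∈ Set.Ioi (0 : ℝ),
      F' y = ((‖deriv ψ y‖ ^ 2 + α ^ 2 * ‖ψ y‖ ^ 2 : ℝ) : ℂ)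
        + Complex.ofReal (deriv (deriv U) y) * (‖ψ y‖ : ℂ) ^ 2 / ((U y : ℂ) - c) := by
    intro y hy
    have h := hray y hy
    simp only [hF'def]
    have hpsisq : ((‖ψ y‖ : ℂ)) ^ 2 = (starRingEnd ℂ) (ψ y) * ψ y := (key _).symm
    have hcast : ((‖deriv ψ y‖ ^ 2 + α ^ 2 * ‖ψ y‖ ^ 2 : ℝ) : ℂ)
        = ((‖deriv ψ y‖ : ℂ)) ^ 2 + (α : ℂ) ^ 2 * ((‖ψ y‖ : ℂ)) ^ 2 := by
      push_cast
      ring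
    have hpsi2 : deriv (deriv ψ) y
        = (α : ℂ) ^ 2 * ψ y + Complex.ofReal (deriv (deriv U) y) * ψ y / ((U y : ℂ) - c) := by
      field_simp [hne y]
      linear_combination h
    rw [hcast, hpsisq, hpsi2]
    field_simp [hne y]
    ring
  -- integrability
  have hsq : IntegrableOn (fun y => ‖ψ y‖ ^ 2) (Set.Ioi (0 : ℝ)) volume :=
    (memLp_two_iff_integrable_sq_norm hL2.aestronglyMeasurable).mp hL2
  have hsq' : IntegrableOn (fun y => ‖deriv ψ y‖ ^ 2) (Set.Ioi (0 : ℝ)) volume :=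
    (memLp_two_iff_integrable_sq_norm hL2'.aestronglyMeasurable).mp hL2'
  have hreal : IntegrableOn (fun y => ‖deriv ψ y‖ ^ 2 + α ^ 2 * ‖ψ y‖ ^ 2)
      (Set.Ioi (0 : ℝ)) volume := hsq'.add (hsq.const_mul _)
  have hrealC : IntegrableOn (fun y => ((‖deriv ψ y‖ ^ 2 + α ^ 2 * ‖ψ y‖ ^ 2 : ℝ) : ℂ))
      (Set.Ioi (0 : ℝ)) volume := hreal.ofReal
  have hG : IntegrableOn (fun y => ((‖deriv ψ y‖ ^ 2 + α ^ 2 * ‖ψ y‖ ^ 2 : ℝ) : ℂ)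
      + Complex.ofReal (deriv (deriv U) y) * (‖ψ y‖ : ℂ) ^ 2 / ((U y : ℂ) - c))
      (Set.Ioi (0 : ℝ)) volume := hrealC.add hint
  have hF'int : IntegrableOn F' (Set.Ioi (0 : ℝ)) volume :=
    hG.congr_fun (fun y hy => (heq y hy).symm) measurableSet_Ioi
  -- FTC on (0, ∞)
  have hFcont : ContinuousWithinAt F (Set.Ici 0) 0 := by
    have : Continuous F := by
      simp only [hFdef]
      exact (continuous_star.comp hd.1.continuous).mul hd1.1.continuous
    exact this.continuousWithinAt
  have hFtop : Filter.Tendsto F Filter.atTop (nhds 0) := by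
    have h1 : Filter.Tendsto (fun y => (starRingEnd ℂ) (ψ y)) Filter.atTop
        (nhds ((starRingEnd ℂ) 0)) := (continuous_star.tendsto _).comp hdecay
    have := h1.mul hdecay'
    simpa using this
  have hFTC : ∫ y in Set.Ioi (0 : ℝ), F' y = 0 - F 0 :=
    integral_Ioi_of_hasDerivAt_of_tendsto hFcont (fun x _ => hF' x) hF'int hFtop
  have hF0 : F 0 = 0 := by simp [hFdef, hbc]
  rw [hF0, sub_zero] at hFTC
  -- split the integral
  have hsplit : ∫ y in Set.Ioi (0 : ℝ), F' y
      = ((∫ y in Set.Ioi (0 : ℝ), (‖deriv ψ y‖ ^ 2 + α ^ 2 * ‖ψ y‖ ^ 2) : ℝ) : ℂ)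
        + ∫ y in Set.Ioi (0 : ℝ),
            Complex.ofReal (deriv (deriv U) y) * (‖ψ y‖ : ℂ) ^ 2 / ((U y : ℂ) - c) := by
    have hcast := Complex.ofRealCLM.integral_comp_comm hreal
    simp only [Complex.ofRealCLM_apply] at hcast
    rw [setIntegral_congr_fun measurableSet_Ioi heq, integral_add hrealC hint, hcast]
  have hmain : ((∫ y in Set.Ioi (0 : ℝ), (‖deriv ψ y‖ ^ 2 + α ^ 2 * ‖ψ y‖ ^ 2) : ℝ) : ℂ)
      = - ∫ y in Set.Ioi (0 : ℝ),
          Complex.ofReal (deriv (deriv U) y) * (‖ψ y‖ : ℂ) ^ 2 / ((U y : ℂ) - c) := by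
    rw [hsplit] at hFTC
    linear_combination hFTC
  refine ⟨hmain, ?_⟩
  -- taking imaginary parts
  have hIm : (∫ y in Set.Ioi (0 : ℝ),
      Complex.ofReal (deriv (deriv U) y) * (‖ψ y‖ : ℂ) ^ 2 / ((U y : ℂ) - c)).im = 0 := by
    have := congrArg Complex.im hmain
    simp only [Complex.ofReal_im, Complex.neg_im] at this
    linarith
  have hIm2 : ∫ y in Set.Ioi (0 : ℝ),
      (Complex.ofReal (deriv (deriv U) y) * (‖ψ y‖ : ℂ) ^ 2 / ((U y : ℂ) - c)).im = 0 := by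
    have h := integral_im (𝕜 := ℂ) hint
    simp only [RCLike.im_to_complex] at h
    exact h.trans hIm
  have hptwise : ∀ y : ℝ,
      (Complex.ofReal (deriv (deriv U) y) * (‖ψ y‖ : ℂ) ^ 2 / ((U y : ℂ) - c)).im
      = c.im * (deriv (deriv U) y * ‖ψ y‖ ^ 2 / ‖(U y : ℂ) - c‖ ^ 2) := by
    intro y
    have h1 : Complex.ofReal (deriv (deriv U) y) * (‖ψ y‖ : ℂ) ^ 2
        = ((deriv (deriv U) y * ‖ψ y‖ ^ 2 : ℝ) : ℂ) := by push_cast; ring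
    have habs : Complex.normSq ((U y : ℂ) - c) = ‖(U y : ℂ) - c‖ ^ 2 :=
      Complex.normSq_eq_norm_sq _
    have habsne : ‖(U y : ℂ) - c‖ ^ 2 ≠ 0 :=
      pow_ne_zero 2 (norm_ne_zero_iff.mpr (hne y))
    simp only [h1, div_eq_mul_inv, Complex.mul_im, Complex.ofReal_re, Complex.ofReal_im,
      Complex.inv_im, Complex.sub_im, habs, zero_mul, add_zero, zero_sub]
    field_simp
  have hfinal : c.im * ∫ y in Set.Ioi (0 : ℝ),
      deriv (deriv U) y * ‖ψ y‖ ^ 2 / ‖(U y : ℂ) - c‖ ^ 2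
      = ∫ y in Set.Ioi (0 : ℝ),
        (Complex.ofReal (deriv (deriv U) y) * (‖ψ y‖ : ℂ) ^ 2 / ((U y : ℂ) - c)).im := by
    rw [← integral_const_mul]
    exact integral_congr_ae (Filter.Eventually.of_forall fun y => (hptwise y).symm)
  rw [hfinal, hIm2]
end

section
/- If U_s : [0,∞) → ℝ is C², concave (U_s'' ≤ 0) with U_s'' not identically zero only of one sign, then the Rayleigh equation on (0,∞) with boundary condition ψ(0) = 0 and decay at infinity admits no eigenvalue c with Im c > 0. -/
open MeasureTheory ComplexConjugate

private lemma aux_unbdd {f : ℝ → ℂ}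
    (hf : Integrable f (volume.restrict (Set.Ioi (0:ℝ)))) {ε M : ℝ} (hε : 0 < ε) (hM : 0 ≤ M)
    (h : ∀ y : ℝ, M < y → ε ≤ ‖f y‖) : False := by
  have h1 := hf.measure_norm_ge_lt_top hε
  have h2 : Set.Ioi M ⊆ {x | ε ≤ ‖f x‖} := fun y hy => h y hy
  have hss : Set.Ioi M ∩ Set.Ioi (0:ℝ) = Set.Ioi M := by
    ext x
    simp only [Set.mem_inter_iff, Set.mem_Ioi, and_iff_left_iff_imp]
    intro hx; linarith
  have h3 : (volume.restrict (Set.Ioi (0:ℝ))) (Set.Ioi M) = ⊤ := by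
    rw [Measure.restrict_apply measurableSet_Ioi, hss, Real.volume_Ioi]
  have h4 := measure_mono (μ := volume.restrict (Set.Ioi (0:ℝ))) h2
  rw [h3] at h4
  exact absurd (lt_of_le_of_lt h4 h1) (lt_irrefl _)

/-- A concave shear profile (`U_s'' ≤ 0`) is spectrally stable: the Rayleigh equation on
`(0,∞)` with `ψ(0) = 0` and `ψ, ψ' ∈ L²` admits no eigenvalue `c` with `Im c > 0`, i.e.
every such solution `ψ` is trivial on `[0,∞)`. -/
theorem concave_profile_no_unstable_rayleigh_eigenvalue
    (U : ℝ → ℝ) (hU : ContDiff ℝ 2 U)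
    (hconc : ∀ y : ℝ, 0 ≤ y → deriv (deriv U) y ≤ 0)
    (α : ℝ) (hα : α ≠ 0)
    (c : ℂ) (hc : 0 < c.im)
    (ψ : ℝ → ℂ) (hψ : ContDiff ℝ 2 ψ)
    (hbc : ψ 0 = 0)
    (hL2 : MemLp ψ 2 (volume.restrict (Set.Ioi (0 : ℝ))))
    (hL2' : MemLp (deriv ψ) 2 (volume.restrict (Set.Ioi (0 : ℝ))))
    (hray : ∀ y : ℝ, 0 < y →
      ((U y : ℂ) - c) * (deriv (deriv ψ) y - (α : ℂ) ^ 2 * ψ y)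
        = Complex.ofReal (deriv (deriv U) y) * ψ y) :
    ∀ y : ℝ, 0 ≤ y → ψ y = 0 := by
  -- smoothness facts
  have h1 : ContDiff ℝ ((1:WithTop ℕ∞)+1) ψ := by norm_num; exact hψ
  rw [contDiff_succ_iff_deriv] at h1
  have hdψ : Differentiable ℝ ψ := h1.1
  have h2 : ContDiff ℝ 1 (deriv ψ) := h1.2.2
  have hdψ' : Differentiable ℝ (deriv ψ) := (contDiff_one_iff_deriv.mp h2).1
  have hcψ : Continuous ψ := hψ.continuous
  have hcψ' : Continuous (deriv ψ) := h2.continuous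
  have hcψ'' : Continuous (deriv (deriv ψ)) := h2.continuous_deriv le_rfl
  have hU1 : ContDiff ℝ ((1:WithTop ℕ∞)+1) U := by norm_num; exact hU
  rw [contDiff_succ_iff_deriv] at hU1
  have hcU : Continuous U := hU.continuous
  have hcU'' : Continuous (deriv (deriv U)) := hU1.2.2.continuous_deriv le_rfl
  -- denominator never vanishes
  have hden : ∀ y : ℝ, ((U y : ℂ) - c) ≠ 0 := by
    intro y h
    have him : ((U y : ℂ) - c).im = 0 := by rw [h]; simp
    simp only [Complex.sub_im, Complex.ofReal_im, zero_sub, neg_eq_zero] at him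
    exact absurd him hc.ne'
  have hdenSqpos : ∀ y : ℝ, 0 < Complex.normSq ((U y : ℂ) - c) :=
    fun y => Complex.normSq_pos.mpr (hden y)
  have hdenSq : ∀ y : ℝ, Complex.normSq ((U y : ℂ) - c) ≠ 0 :=
    fun y => (hdenSqpos y).ne'
  -- the potential Q
  set Q : ℝ → ℂ := fun y => Complex.ofReal (deriv (deriv U) y) / ((U y : ℂ) - c) with hQdef
  have hcQ : Continuous Q :=
    (Complex.continuous_ofReal.comp hcU'').div
      ((Complex.continuous_ofReal.comp hcU).sub continuous_const) hden
  have hQeq : ∀ y : ℝ, 0 < y →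
      deriv (deriv ψ) y = (α:ℂ)^2 * ψ y + Q y * ψ y := by
    intro y hy
    have h := hray y hy
    have h2 : deriv (deriv ψ) y - (α:ℂ)^2 * ψ y = Q y * ψ y := by
      rw [hQdef, div_mul_eq_mul_div, eq_div_iff (hden y)]
      linear_combination h
    linear_combination h2
  -- integration by parts
  have ibp : ∀ R : ℝ,
      (∫ y in (0:ℝ)..R, (deriv (deriv ψ) y * conj (ψ y) + deriv ψ y * conj (deriv ψ y)))
        = deriv ψ R * conj (ψ R) := by
    intro R
    have h := intervalIntegral.integral_deriv_mul_eq_sub_of_hasDerivAt (a := (0:ℝ)) (b := R)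
      (u := deriv ψ) (v := fun y => conj (ψ y))
      (u' := deriv (deriv ψ)) (v' := fun y => conj (deriv ψ y))
      (hcψ'.continuousOn)
      ((Complex.continuous_conj.comp hcψ).continuousOn)
      (fun x _ => (hdψ' x).hasDerivAt)
      (fun x _ => by simpa using ((hdψ x).hasDerivAt).star)
      (hcψ''.intervalIntegrable _ _)
      ((Complex.continuous_conj.comp hcψ').intervalIntegrable _ _)
    rw [h]
    simp [hbc]
  -- master identity
  have keyGen : ∀ R : ℝ, 0 < R → deriv ψ R * conj (ψ R)
      = ∫ y in (0:ℝ)..R, (deriv ψ y * conj (deriv ψ y)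
          + (α:ℂ)^2 * (ψ y * conj (ψ y)) + Q y * (ψ y * conj (ψ y))) := by
    intro R hR
    rw [← ibp R, intervalIntegral.integral_of_le hR.le, intervalIntegral.integral_of_le hR.le]
    apply setIntegral_congr_fun measurableSet_Ioc
    intro y hy
    simp only
    rw [hQeq y hy.1]
    ring
  -- continuity of products
  have hcP : Continuous (fun y => ψ y * conj (ψ y)) :=
    hcψ.mul (Complex.continuous_conj.comp hcψ)
  have hcP' : Continuous (fun y => deriv ψ y * conj (deriv ψ y)) :=
    hcψ'.mul (Complex.continuous_conj.comp hcψ')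
  have hcInt : Continuous (fun y => deriv ψ y * conj (deriv ψ y)
      + (α:ℂ)^2 * (ψ y * conj (ψ y)) + Q y * (ψ y * conj (ψ y))) :=
    (hcP'.add (continuous_const.mul hcP)).add (hcQ.mul hcP)
  -- the imaginary part of the integrand
  set g : ℝ → ℝ := fun y =>
      c.im * deriv (deriv U) y * Complex.normSq (ψ y) / Complex.normSq ((U y:ℂ) - c) with hgdef
  have hcg : Continuous g :=
    ((continuous_const.mul hcU'').mul (Complex.continuous_normSq.comp hcψ)).div
      (Complex.continuous_normSq.comp
        ((Complex.continuous_ofReal.comp hcU).sub continuous_const)) hdenSq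
  have hFgAux : ∀ y : ℝ, (deriv ψ y * conj (deriv ψ y)
      + (α:ℂ)^2 * (ψ y * conj (ψ y)) + Q y * (ψ y * conj (ψ y))).im = g y := by
    intro y
    rw [hgdef, hQdef]
    simp only [Complex.mul_conj]
    simp only [← Complex.ofReal_pow, Complex.add_im, Complex.mul_im, Complex.div_im,
      Complex.ofReal_re, Complex.ofReal_im, Complex.sub_im, Complex.sub_re, Complex.div_re]
    field_simp
    ring
  have hFg : ∀ R : ℝ, 0 < R → (deriv ψ R * conj (ψ R)).im = ∫ y in (0:ℝ)..R, g y := by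
    intro R hR
    rw [keyGen R hR]
    calc (∫ y in (0:ℝ)..R, (deriv ψ y * conj (deriv ψ y)
          + (α:ℂ)^2 * (ψ y * conj (ψ y)) + Q y * (ψ y * conj (ψ y)))).im
        = ∫ y in (0:ℝ)..R, Complex.imCLM (deriv ψ y * conj (deriv ψ y)
          + (α:ℂ)^2 * (ψ y * conj (ψ y)) + Q y * (ψ y * conj (ψ y))) :=
          (Complex.imCLM.intervalIntegral_comp_comm (hcInt.intervalIntegrable 0 R)).symm
      _ = ∫ y in (0:ℝ)..R, g y := intervalIntegral.integral_congr fun y _ => hFgAux y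
  -- integrability of products on (0,∞)
  have hconj2 : MemLp (fun y => conj (ψ y)) 2 (volume.restrict (Set.Ioi (0:ℝ))) := by
    have h := (Complex.conjCLE.toContinuousLinearMap).comp_memLp' hL2
    exact h
  have hpq : (1:ENNReal)/1 = 1/2 + 1/2 := by rw [ENNReal.add_halves]; simp
  have hint1 : Integrable (fun y => deriv ψ y * conj (ψ y))
      (volume.restrict (Set.Ioi (0:ℝ))) := by
    have h := hconj2.smul hL2' (r := 1)
    rw [memLp_one_iff_integrable] at h
    exact h
  have hint0 : Integrable (fun y => ψ y * conj (ψ y))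
      (volume.restrict (Set.Ioi (0:ℝ))) := by
    have h := hconj2.smul hL2 (r := 1)
    rw [memLp_one_iff_integrable] at h
    exact h
  -- g is nonpositive on [0,∞)
  have hg_nonpos : ∀ y : ℝ, 0 ≤ y → g y ≤ 0 := by
    intro y hy
    rw [hgdef]
    apply div_nonpos_of_nonpos_of_nonneg _ (Complex.normSq_nonneg _)
    have h1 : deriv (deriv U) y ≤ 0 := hconc y hy
    nlinarith [mul_nonneg (mul_nonneg hc.le (Complex.normSq_nonneg (ψ y))) (neg_nonneg.mpr h1)]
  have hFnonpos : ∀ R : ℝ, 0 < R → (deriv ψ R * conj (ψ R)).im ≤ 0 := by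
    intro R hR
    rw [hFg R hR]
    have h := intervalIntegral.integral_nonneg (μ := volume) (f := fun t => -g t) hR.le
      (fun u hu => neg_nonneg.mpr (hg_nonpos u hu.1))
    rw [intervalIntegral.integral_neg] at h
    linarith
  have hFnonneg : ∀ R : ℝ, 0 < R → 0 ≤ (deriv ψ R * conj (ψ R)).im := by
    intro R₀ hR₀
    by_contra hneg
    push_neg at hneg
    have hub : ∀ y : ℝ, R₀ < y →
        (deriv ψ y * conj (ψ y)).im ≤ (deriv ψ R₀ * conj (ψ R₀)).im := by
      intro y hy
      have e1 := hFg R₀ hR₀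
      have e2 := hFg y (hR₀.trans hy)
      have hsplit := intervalIntegral.integral_add_adjacent_intervals
        (μ := volume) (a := (0:ℝ)) (b := R₀) (c := y) (f := g)
        (hcg.intervalIntegrable _ _) (hcg.intervalIntegrable _ _)
      have hle : ∫ t in R₀..y, g t ≤ 0 := by
        have h := intervalIntegral.integral_nonneg (μ := volume) (f := fun t => -g t) hy.le
          (fun u hu => neg_nonneg.mpr (hg_nonpos u (le_trans hR₀.le hu.1)))
        rw [intervalIntegral.integral_neg] at h
        linarith
      rw [e1, e2, ← hsplit]
      linarith
    refine aux_unbdd hint1 (ε := -(deriv ψ R₀ * conj (ψ R₀)).im) (by linarith) (M := R₀)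
      hR₀.le ?_
    intro y hy
    have h3 := hub y hy
    calc -(deriv ψ R₀ * conj (ψ R₀)).im ≤ -(deriv ψ y * conj (ψ y)).im := by linarith
      _ ≤ |(deriv ψ y * conj (ψ y)).im| := neg_le_abs _
      _ ≤ ‖deriv ψ y * conj (ψ y)‖ := Complex.abs_im_le_norm _
      _ = ‖deriv ψ y * conj (ψ y)‖ := rfl
  have hF0 : ∀ R : ℝ, 0 < R → (deriv ψ R * conj (ψ R)).im = 0 :=
    fun R hR => le_antisymm (hFnonpos R hR) (hFnonneg R hR)
  -- g vanishes identically on (0,∞)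
  have hgzero : ∀ y : ℝ, 0 < y → g y = 0 := by
    intro y₀ hy₀
    by_contra hne
    have hlt : g y₀ < 0 := lt_of_le_of_ne (hg_nonpos y₀ hy₀.le) hne
    obtain ⟨δ, hδpos, hδ⟩ := Metric.continuousAt_iff.mp hcg.continuousAt
      (ε := -g y₀ / 2) (by linarith)
    set a := max (y₀ - δ/2) (y₀/2) with hadef
    set b := y₀ + δ/2 with hbdef
    have ha0 : 0 < a := lt_max_of_lt_right (by linarith)
    have hay : a < y₀ := max_lt (by linarith) (by linarith)
    have hyb : y₀ < b := by rw [hbdef]; linarith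
    have hab : a < b := hay.trans hyb
    have hbound : ∀ x ∈ Set.Icc a b, g x ≤ g y₀ / 2 := by
      intro x hx
      have h1 : y₀ - δ/2 ≤ a := le_max_left _ _
      have hdist : dist x y₀ < δ := by
        rw [Real.dist_eq, abs_lt]
        constructor
        · have := hx.1; rw [hbdef] at *; linarith
        · have := hx.2; rw [hbdef] at *; linarith
      have h2 := hδ hdist
      rw [Real.dist_eq, abs_lt] at h2
      linarith [h2.1, h2.2]
    have hI : ∫ t in a..b, g t ≤ g y₀ / 2 * (b - a) := by
      have h := intervalIntegral.integral_mono_on (μ := volume) hab.le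
        (hcg.intervalIntegrable _ _) intervalIntegrable_const hbound
      rwa [intervalIntegral.integral_const, smul_eq_mul, mul_comm] at h
    have hIz : ∫ t in a..b, g t = 0 := by
      have s1 := intervalIntegral.integral_add_adjacent_intervals (μ := volume)
        (a := (0:ℝ)) (b := a) (c := b) (f := g)
        (hcg.intervalIntegrable _ _) (hcg.intervalIntegrable _ _)
      have e1 := hFg a ha0
      have e2 := hFg b (ha0.trans hab)
      rw [hF0 a ha0] at e1
      rw [hF0 b (ha0.trans hab)] at e2
      linarith [s1]
    nlinarith [mul_neg_of_neg_of_pos (show g y₀ / 2 < 0 by linarith)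
      (show (0:ℝ) < b - a by linarith)]
  -- hence U'' ψ = 0 on (0,∞)
  have hU2ψ : ∀ y : ℝ, 0 < y → Complex.ofReal (deriv (deriv U) y) * ψ y = 0 := by
    intro y hy
    have h := hgzero y hy
    simp only [hgdef] at h
    rw [div_eq_zero_iff] at h
    rcases h with h | h
    · rcases mul_eq_zero.mp h with h2 | h2
      · rcases mul_eq_zero.mp h2 with h3 | h3
        · exact absurd h3 hc.ne'
        · rw [h3]; simp
      · rw [Complex.normSq_eq_zero.mp h2, mul_zero]
    · exact absurd h (hdenSq y)
  have hQzero : ∀ y : ℝ, 0 < y → Q y * (ψ y * conj (ψ y)) = 0 := by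
    intro y hy
    rw [hQdef]
    simp only
    rw [div_mul_eq_mul_div, ← mul_assoc, hU2ψ y hy, zero_mul, zero_div]
  -- the reduced identity
  have hcInt2 : Continuous (fun y => deriv ψ y * conj (deriv ψ y)
      + (α:ℂ)^2 * (ψ y * conj (ψ y))) := hcP'.add (continuous_const.mul hcP)
  have key2 : ∀ R : ℝ, 0 < R → deriv ψ R * conj (ψ R)
      = ∫ y in (0:ℝ)..R, (deriv ψ y * conj (deriv ψ y) + (α:ℂ)^2 * (ψ y * conj (ψ y))) := by
    intro R hR
    rw [keyGen R hR, intervalIntegral.integral_of_le hR.le,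
      intervalIntegral.integral_of_le hR.le]
    apply setIntegral_congr_fun measurableSet_Ioc
    intro y hy
    simp only
    rw [hQzero y hy.1, add_zero]
  set h₂ : ℝ → ℝ := fun y => Complex.normSq (deriv ψ y) + α^2 * Complex.normSq (ψ y)
    with hh2def
  have hch2 : Continuous h₂ := (Complex.continuous_normSq.comp hcψ').add
    (continuous_const.mul (Complex.continuous_normSq.comp hcψ))
  have hh2nonneg : ∀ y, 0 ≤ h₂ y := fun y => add_nonneg (Complex.normSq_nonneg _)
    (mul_nonneg (sq_nonneg α) (Complex.normSq_nonneg _))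
  have hReAux : ∀ y : ℝ, (deriv ψ y * conj (deriv ψ y) + (α:ℂ)^2 * (ψ y * conj (ψ y))).re
      = h₂ y := by
    intro y
    rw [hh2def]
    simp only [Complex.mul_conj, ← Complex.ofReal_pow, ← Complex.ofReal_mul]
    rw [← Complex.ofReal_add, Complex.ofReal_re]
  have hGre : ∀ R : ℝ, 0 < R → (deriv ψ R * conj (ψ R)).re = ∫ y in (0:ℝ)..R, h₂ y := by
    intro R hR
    rw [key2 R hR]
    calc (∫ y in (0:ℝ)..R, (deriv ψ y * conj (deriv ψ y)
          + (α:ℂ)^2 * (ψ y * conj (ψ y)))).re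
        = ∫ y in (0:ℝ)..R, Complex.reCLM (deriv ψ y * conj (deriv ψ y)
            + (α:ℂ)^2 * (ψ y * conj (ψ y))) :=
          (Complex.reCLM.intervalIntegral_comp_comm (hcInt2.intervalIntegrable 0 R)).symm
      _ = ∫ y in (0:ℝ)..R, h₂ y := intervalIntegral.integral_congr fun y _ => hReAux y
  -- derivative of |ψ|²
  have hN : ∀ x : ℝ, HasDerivAt (fun y => Complex.normSq (ψ y))
      (2 * (deriv ψ x * conj (ψ x)).re) x := by
    intro x
    have hd1 : HasDerivAt (fun y => ψ y * conj (ψ y))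
        (deriv ψ x * conj (ψ x) + ψ x * conj (deriv ψ x)) x := by
      have h := ((hdψ x).hasDerivAt).mul (((hdψ x).hasDerivAt).star)
      exact h
    have hd2 := Complex.reCLM.hasFDerivAt.comp_hasDerivAt x hd1
    have heq : (fun y => Complex.normSq (ψ y))
        = fun y => Complex.reCLM (ψ y * conj (ψ y)) := by
      funext y
      simp [Complex.mul_conj]
    rw [heq]
    have hval : Complex.reCLM (deriv ψ x * conj (ψ x) + ψ x * conj (deriv ψ x))
        = 2 * (deriv ψ x * conj (ψ x)).re := by
      simp only [Complex.reCLM_apply, Complex.add_re, Complex.mul_re,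
        Complex.conj_re, Complex.conj_im]
      ring
    rw [← hval]
    exact hd2
  -- ψ vanishes on (0,∞)
  have hψzero : ∀ y : ℝ, 0 < y → ψ y = 0 := by
    intro y₀ hy₀
    by_contra hne
    have hpos : 0 < h₂ y₀ := by
      simp only [hh2def]
      exact add_pos_of_nonneg_of_pos (Complex.normSq_nonneg _)
        (mul_pos (by positivity) (Complex.normSq_pos.mpr hne))
    obtain ⟨δ, hδpos, hδ⟩ := Metric.continuousAt_iff.mp hch2.continuousAt
      (ε := h₂ y₀ / 2) (half_pos hpos)
    set a := max (y₀ - δ/2) (y₀/2) with hadef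
    set b := y₀ + δ/2 with hbdef
    have ha0 : 0 < a := lt_max_of_lt_right (by linarith)
    have hay : a < y₀ := max_lt (by linarith) (by linarith)
    have hyb : y₀ < b := by rw [hbdef]; linarith
    have hab : a < b := hay.trans hyb
    have hb0 : 0 < b := ha0.trans hab
    have hbound : ∀ x ∈ Set.Icc a b, h₂ y₀ / 2 ≤ h₂ x := by
      intro x hx
      have h1 : y₀ - δ/2 ≤ a := le_max_left _ _
      have hdist : dist x y₀ < δ := by
        rw [Real.dist_eq, abs_lt]
        constructor
        · have := hx.1; rw [hbdef] at *; linarith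
        · have := hx.2; rw [hbdef] at *; linarith
      have h2 := hδ hdist
      rw [Real.dist_eq, abs_lt] at h2
      linarith [h2.1, h2.2]
    set ε := h₂ y₀ / 2 * (b - a) with hedef
    have hεpos : 0 < ε := by
      rw [hedef]
      have : (0:ℝ) < b - a := by linarith
      positivity
    have hlower : ∀ R : ℝ, b ≤ R → ε ≤ ∫ y in (0:ℝ)..R, h₂ y := by
      intro R hbR
      have s1 := intervalIntegral.integral_add_adjacent_intervals (μ := volume)
        (a := (0:ℝ)) (b := a) (c := b) (f := h₂)
        (hch2.intervalIntegrable _ _) (hch2.intervalIntegrable _ _)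
      have s2 := intervalIntegral.integral_add_adjacent_intervals (μ := volume)
        (a := (0:ℝ)) (b := b) (c := R) (f := h₂)
        (hch2.intervalIntegrable _ _) (hch2.intervalIntegrable _ _)
      have n1 : 0 ≤ ∫ y in (0:ℝ)..a, h₂ y :=
        intervalIntegral.integral_nonneg ha0.le (fun u _ => hh2nonneg u)
      have n2 : 0 ≤ ∫ y in b..R, h₂ y :=
        intervalIntegral.integral_nonneg hbR (fun u _ => hh2nonneg u)
      have n3 : ε ≤ ∫ y in a..b, h₂ y := by
        have h := intervalIntegral.integral_mono_on (μ := volume) hab.le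
          intervalIntegrable_const (hch2.intervalIntegrable _ _) hbound
        rw [intervalIntegral.integral_const, smul_eq_mul] at h
        rw [hedef]
        linarith [h]
      linarith
    set φf : ℝ → ℝ := fun y => Complex.normSq (ψ y) - 2*ε*y with hφdef
    have hφderiv : ∀ x : ℝ, HasDerivAt φf (2 * (deriv ψ x * conj (ψ x)).re - 2*ε) x := by
      intro x
      have h := (hN x).sub (((hasDerivAt_id x).const_mul (2*ε)))
      exact h.congr_deriv (by ring)
    have hmono : MonotoneOn φf (Set.Ici b) := by
      apply monotoneOn_of_deriv_nonneg (convex_Ici b)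
      · exact ((Complex.continuous_normSq.comp hcψ).sub
          (continuous_const.mul continuous_id)).continuousOn
      · intro x _
        exact (hφderiv x).differentiableAt.differentiableWithinAt
      · intro x hx
        rw [interior_Ici] at hx
        rw [(hφderiv x).deriv]
        have hxpos : (0:ℝ) < x := hb0.trans hx
        have hl := hlower x hx.le
        rw [← hGre x hxpos] at hl
        linarith
    have hgrow : ∀ R : ℝ, b ≤ R → 2*ε*(R - b) ≤ Complex.normSq (ψ R) := by
      intro R hbR
      have h := hmono (Set.self_mem_Ici) (Set.mem_Ici.mpr hbR) hbR
      simp only [hφdef] at h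
      have hb2 : 0 ≤ Complex.normSq (ψ b) := Complex.normSq_nonneg _
      nlinarith [h]
    refine aux_unbdd hint0 (ε := 1) one_pos (M := b + 1/(2*ε)) (by positivity) ?_
    intro y hy
    have hby : b ≤ y := by
      have h5 : 0 < 1/(2*ε) := by positivity
      exact le_of_lt (lt_of_le_of_lt (le_add_of_nonneg_right h5.le) hy)
    have h1 := hgrow y hby
    have h2 : (1:ℝ) ≤ Complex.normSq (ψ y) := by
      have h3 : 1/(2*ε) < y - b := by linarith
      have h4 : 2*ε*(1/(2*ε)) ≤ 2*ε*(y-b) := by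
        apply mul_le_mul_of_nonneg_left h3.le
        positivity
      rw [mul_one_div, div_self (by positivity : (2:ℝ)*ε ≠ 0)] at h4
      linarith
    calc (1:ℝ) ≤ Complex.normSq (ψ y) := h2
      _ = ‖ψ y * conj (ψ y)‖ := by
          rw [Complex.mul_conj, Complex.norm_real, Real.norm_eq_abs,
            abs_of_nonneg (Complex.normSq_nonneg _)]
  intro y hy
  rcases eq_or_lt_of_le hy with h | h
  · rw [← h]; exact hbc
  · exact hψzero y h
end
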